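/- arXiv:2004.12379 — 4 statements merged into one kernel-verified Lean document; each statement's English description precedes it below -/
import Mathlib

section
/- Let 1 ≤ p < ∞ and 0 < η < 1. Let f : [η,1] → [0,∞) be continuous, nonincreasing and convex with f(η) ≤ 1, f(1) = 0 and f(x) > 0 for x ∈ [η,1), and assume there is r ≥ 1 such that x ↦ f(x)^{1/r} is concave on [η,1]. Let K ⊆ ℝ² be a compact set containing {(x,y) : η ≤ x ≤ 1, 0 ≤ y ≤ f(x)}. Assume that for every sufficiently large n there exist ε_n > 0 and x_n ∈ (η,1) with x_n = 1 − √(1/(4n⁴) − ε_n²/n⁴) and f(x_n) = ε_n/n², and that ε_n → 0. Let α ≥ 0 and β > −1. Then there exist Υ > 0 and n₀ such that for all n ≥ n₀, ∬_K |P_n^{(α,β)}(x)|^p dx dy ≥ Υ ε_n n^{αp − 4}. -/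
/-!
Near `x = 1` the Jacobi polynomial is comparable to its value
`P_n(1) = Γ(n+α+1) / (Γ(α+1) Γ(n+1))`, which is at least `n^α / Γ(α+1)` by log-convexity of `Γ`.
Indeed, the `s`-th term of the defining sum is at most `P_n(1) (n² (1 - x))^s / s!`, so for
`1 - 1/(2n²) ≤ x ≤ 1` the terms with `s ≥ 1` add up to at most
`(e^{1/2} - 1) P_n(1) ≤ (2/3) P_n(1)`, while the term `s = 0` is at least `(3/4) P_n(1)`;
hence `P_n(x) ≥ P_n(1) / 12` there.
Concavity of `f^{1/r}` together with `f(1) = 0` gives `f ≥ 2^{-r} f(x_n) = 2^{-r} ε_n / n²` on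
`[x_n, (x_n + 1)/2]`, so `K` contains a rectangle of width `(1 - x_n)/2 ≥ 1/(8n²)` and height
`2^{-r} ε_n / n²` on which `|P_n|^p ≥ (n^α / (12 Γ(α+1)))^p`.
-/

open MeasureTheory

/-- The Jacobi polynomial `P_n^{(α,β)}` as a real function. -/
noncomputable def jacobiP (n : ℕ) (α β : ℝ) (x : ℝ) : ℝ :=
  ∑ s ∈ Finset.range (n + 1),
    (Real.Gamma (n + α + 1) / (Real.Gamma (s + α + 1) * Real.Gamma ((n : ℝ) - s + 1))) *
    (Real.Gamma (n + β + 1) / (Real.Gamma ((n : ℝ) - s + β + 1) * Real.Gamma (s + 1))) *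
    ((x - 1) / 2) ^ s * ((x + 1) / 2) ^ (n - s)

namespace Real

theorem Gamma_le_Gamma_add_nat {t : ℝ} (ht : 1 ≤ t) (k : ℕ) : Gamma t ≤ Gamma (t + k) := by
  induction k with
  | zero => simp
  | succ k ih =>
    have htk : 1 ≤ t + k := by linarith [(Nat.cast_nonneg k : (0 : ℝ) ≤ k)]
    rw [Nat.cast_succ, ← add_assoc, Gamma_add_one (by linarith)]
    nlinarith [Gamma_pos_of_pos (by linarith : 0 < t + k)]

theorem Gamma_add_nat_le_mul_pow {t M : ℝ} (ht : 0 < t) {k : ℕ} (hM : t + k ≤ M + 1) :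
    Gamma (t + k) ≤ Gamma t * M ^ k := by
  induction k with
  | zero => simp
  | succ k ih =>
    push_cast at hM ⊢
    have htk : 0 < t + k := by positivity
    rw [← add_assoc, Gamma_add_one htk.ne']
    calc (t + k) * Gamma (t + k) ≤ M * (Gamma t * M ^ k) :=
          mul_le_mul (by linarith) (ih (by linarith)) (Gamma_pos_of_pos htk).le (by linarith)
      _ = Gamma t * M ^ (k + 1) := by ring

theorem rpow_mul_Gamma_add_one_le {x a : ℝ} (hx : 0 < x) (ha : 0 ≤ a) :
    x ^ a * Gamma (x + 1) ≤ Gamma (x + a + 1) := by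
  rcases ha.eq_or_lt with rfl | ha
  · simp
  have hΓx := Gamma_pos_of_pos hx
  have hΓx1 := Gamma_pos_of_pos (by linarith : 0 < x + 1)
  -- the slope of `log ∘ Gamma` on `[x, x + 1]` is `log x`, and it increases to the right
  have hslope := convexOn_log_Gamma.slope_mono_adjacent (y := x + 1) (z := x + 1 + a) hx
    (by simp only [Set.mem_Ioi]; linarith) (by linarith) (by linarith)
  simp only [Function.comp_apply, add_sub_cancel_left, div_one,
    Gamma_add_one hx.ne', log_mul hx.ne' hΓx.ne', add_sub_cancel_right] at hslope
  rw [← log_le_log_iff (by positivity) (Gamma_pos_of_pos (by linarith)),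
    log_mul (by positivity) hΓx1.ne', log_rpow hx, Gamma_add_one hx.ne',
    log_mul hx.ne' hΓx.ne', add_right_comm x a]
  rw [le_div_iff₀ ha] at hslope
  linarith

theorem exp_half_le_five_thirds : exp (1 / 2) ≤ 5 / 3 := by
  have hsq : exp (1 / 2) * exp (1 / 2) = exp 1 := by rw [← exp_add]; norm_num
  nlinarith [exp_one_lt_d9, exp_pos (1 / 2)]

end Real

open Real

noncomputable def jacobiCoeff (n : ℕ) (α β : ℝ) (s : ℕ) : ℝ :=
  (Gamma (n + α + 1) / (Gamma (s + α + 1) * Gamma ((n : ℝ) - s + 1))) *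
    (Gamma (n + β + 1) / (Gamma ((n : ℝ) - s + β + 1) * Gamma (s + 1)))

theorem jacobiP_eq_sum (n : ℕ) (α β x : ℝ) :
    jacobiP n α β x = ∑ s ∈ Finset.range (n + 1),
      jacobiCoeff n α β s * ((x - 1) / 2) ^ s * ((x + 1) / 2) ^ (n - s) := rfl

theorem continuous_jacobiP (n : ℕ) (α β : ℝ) : Continuous (jacobiP n α β) := by
  unfold jacobiP
  fun_prop

section JacobiCoeff

variable {n : ℕ} {α β : ℝ}

theorem jacobiCoeff_zero (hβ : -1 < β) :
    jacobiCoeff n α β 0 = Gamma (n + α + 1) / (Gamma (α + 1) * Gamma (n + 1)) := by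
  have : Gamma (n + β + 1) ≠ 0 := (Gamma_pos_of_pos (by linarith [n.cast_nonneg (α := ℝ)])).ne'
  simp [jacobiCoeff, this]

theorem rpow_div_Gamma_le_jacobiCoeff_zero (hn : 0 < n) (hα : 0 ≤ α) (hβ : -1 < β) :
    (n : ℝ) ^ α / Gamma (α + 1) ≤ jacobiCoeff n α β 0 := by
  have hΓα := Gamma_pos_of_pos (by linarith : 0 < α + 1)
  have hΓn := Gamma_pos_of_pos (by positivity : 0 < (n : ℝ) + 1)
  rw [jacobiCoeff_zero hβ, div_le_div_iff₀ hΓα (by positivity)]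
  linarith [mul_le_mul_of_nonneg_right (rpow_mul_Gamma_add_one_le (Nat.cast_pos.mpr hn) hα) hΓα.le]

theorem jacobiCoeff_nonneg (hα : 0 ≤ α) (hβ : -1 < β) {k : ℕ} (hk : k ≤ n) :
    0 ≤ jacobiCoeff n α β k := by
  have hkn : (k : ℝ) ≤ n := by exact_mod_cast hk
  unfold jacobiCoeff
  have := Gamma_pos_of_pos (by linarith : 0 < (n : ℝ) + α + 1)
  have := Gamma_pos_of_pos (by linarith : 0 < (n : ℝ) + β + 1)
  have := Gamma_pos_of_pos (by positivity : 0 < (k : ℝ) + α + 1)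
  have := Gamma_pos_of_pos (by linarith : 0 < (n : ℝ) - k + 1)
  have := Gamma_pos_of_pos (by linarith : 0 < (n : ℝ) - k + β + 1)
  have := Gamma_pos_of_pos (by positivity : 0 < (k : ℝ) + 1)
  positivity

theorem jacobiCoeff_le (hα : 0 ≤ α) (hβ : -1 < β) (hβn : β ≤ n) {k : ℕ} (hk : k ≤ n) :
    jacobiCoeff n α β k ≤ jacobiCoeff n α β 0 * (2 * n ^ 2) ^ k / k.factorial := by
  have hkn : (k : ℝ) ≤ n := by exact_mod_cast hk
  have hΓnα := Gamma_pos_of_pos (by linarith : 0 < (n : ℝ) + α + 1)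
  have hΓkα := Gamma_pos_of_pos (by positivity : 0 < (k : ℝ) + α + 1)
  have hΓnk := Gamma_pos_of_pos (by linarith : 0 < (n : ℝ) - k + 1)
  have hΓnβ := Gamma_pos_of_pos (by linarith : 0 < (n : ℝ) + β + 1)
  have hΓnkβ := Gamma_pos_of_pos (by linarith : 0 < (n : ℝ) - k + β + 1)
  have hΓα := Gamma_pos_of_pos (by linarith : 0 < α + 1)
  have hΓn := Gamma_pos_of_pos (by linarith : 0 < (n : ℝ) + 1)
  have hα_part :
      Gamma (α + 1) * Gamma (n + 1) ≤ Gamma (k + α + 1) * (Gamma (n - k + 1) * n ^ k) := by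
    refine mul_le_mul ?_ ?_ hΓn.le hΓkα.le
    · have h := Gamma_le_Gamma_add_nat (by linarith : 1 ≤ α + 1) k
      rwa [show α + 1 + (k : ℝ) = k + α + 1 by ring] at h
    · have h := Gamma_add_nat_le_mul_pow (M := n) (k := k) (by linarith : 0 < (n : ℝ) - k + 1)
        (by linarith)
      rwa [show (n : ℝ) - k + 1 + k = n + 1 by ring] at h
  have hβ_part : Gamma (n + β + 1) ≤ Gamma (n - k + β + 1) * (2 * n) ^ k := by
    have h := Gamma_add_nat_le_mul_pow (M := 2 * n) (k := k)
      (by linarith : 0 < (n : ℝ) - k + β + 1) (by linarith)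
    rwa [show (n : ℝ) - k + β + 1 + k = n + β + 1 by ring] at h
  have hfact : (0 : ℝ) < k.factorial := by exact_mod_cast k.factorial_pos
  have hA : Gamma (n + α + 1) / (Gamma (k + α + 1) * Gamma (n - k + 1))
      ≤ Gamma (n + α + 1) / (Gamma (α + 1) * Gamma (n + 1)) * n ^ k := by
    rw [div_mul_eq_mul_div, div_le_div_iff₀ (by positivity) (by positivity)]
    linarith [mul_le_mul_of_nonneg_left hα_part hΓnα.le]
  have hB :
      Gamma (n + β + 1) / (Gamma (n - k + β + 1) * k.factorial) ≤ (2 * n) ^ k / k.factorial := by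
    rw [div_le_div_iff₀ (by positivity) hfact]
    linarith [mul_le_mul_of_nonneg_right hβ_part hfact.le]
  rw [jacobiCoeff_zero hβ, jacobiCoeff, Gamma_nat_eq_factorial]
  calc _ ≤ Gamma (n + α + 1) / (Gamma (α + 1) * Gamma (n + 1)) * n ^ k
          * ((2 * n) ^ k / k.factorial) :=
        mul_le_mul hA hB (div_nonneg hΓnβ.le (by positivity)) (by positivity)
    _ = _ := by ring

end JacobiCoeff

section NearOne

variable {n : ℕ} {α β x : ℝ}

theorem abs_jacobiP_sub_le (hα : 0 ≤ α) (hβ : -1 < β) (hβn : β ≤ n) (hx₀ : -1 ≤ x) (hx₁ : x ≤ 1) :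
    |jacobiP n α β x - jacobiCoeff n α β 0 * ((x + 1) / 2) ^ n|
      ≤ jacobiCoeff n α β 0 * (exp (n ^ 2 * (1 - x)) - 1) := by
  set C := jacobiCoeff n α β 0
  set t := (n : ℝ) ^ 2 * (1 - x) with ht_def
  have hC : 0 ≤ C := jacobiCoeff_nonneg hα hβ n.zero_le
  have ht : 0 ≤ t := mul_nonneg (by positivity) (by linarith)
  have hterm : ∀ k ≤ n, |jacobiCoeff n α β k * ((x - 1) / 2) ^ k * ((x + 1) / 2) ^ (n - k)|
      ≤ C * t ^ k / k.factorial := by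
    intro k hk
    have hck := jacobiCoeff_nonneg hα hβ hk
    have habs : |(x - 1) / 2| = (1 - x) / 2 := by
      rw [abs_of_nonpos (by linarith)]
      ring
    rw [abs_mul, abs_mul, abs_of_nonneg hck, abs_pow, abs_pow, habs,
      abs_of_nonneg (by linarith : 0 ≤ (x + 1) / 2)]
    calc _ ≤ jacobiCoeff n α β k * ((1 - x) / 2) ^ k := by
          refine mul_le_of_le_one_right (mul_nonneg hck (pow_nonneg (by linarith) k)) ?_
          exact pow_le_one₀ (by linarith) (by linarith)
      _ ≤ C * (2 * n ^ 2) ^ k / k.factorial * ((1 - x) / 2) ^ k :=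
          mul_le_mul_of_nonneg_right (jacobiCoeff_le hα hβ hβn hk) (pow_nonneg (by linarith) k)
      _ = C * t ^ k / k.factorial := by
          rw [ht_def, show ((n : ℝ) ^ 2 * (1 - x)) ^ k = (2 * n ^ 2) ^ k * ((1 - x) / 2) ^ k by
            rw [← mul_pow]; ring]
          ring
  rw [jacobiP_eq_sum, Finset.sum_range_succ', pow_zero, mul_one, Nat.sub_zero, add_sub_cancel_right]
  calc _ ≤ ∑ s ∈ Finset.range n,
          |jacobiCoeff n α β (s + 1) * ((x - 1) / 2) ^ (s + 1) * ((x + 1) / 2) ^ (n - (s + 1))| :=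
        Finset.abs_sum_le_sum_abs _ _
    _ ≤ ∑ s ∈ Finset.range n, C * t ^ (s + 1) / (s + 1).factorial :=
        Finset.sum_le_sum fun s hs => hterm (s + 1) (Finset.mem_range.mp hs)
    _ = C * (∑ i ∈ Finset.range (n + 1), t ^ i / i.factorial - 1) := by
        simp only [Finset.sum_range_succ', pow_zero, Nat.factorial_zero, Nat.cast_one, div_one,
          add_sub_cancel_right, Finset.mul_sum, mul_div_assoc]
    _ ≤ C * (exp t - 1) := by
        gcongr
        exact sum_le_exp_of_nonneg ht _

theorem jacobiCoeff_zero_div_le_jacobiP (hn : 1 ≤ n) (hα : 0 ≤ α) (hβ : -1 < β) (hβn : β ≤ n)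
    (hx₀ : 1 - 1 / (2 * n ^ 2) ≤ x) (hx₁ : x ≤ 1) :
    jacobiCoeff n α β 0 / 12 ≤ jacobiP n α β x := by
  have hnR : (1 : ℝ) ≤ n := by exact_mod_cast hn
  have hdist : (n : ℝ) ^ 2 * (1 - x) ≤ 1 / 2 := by
    calc (n : ℝ) ^ 2 * (1 - x) ≤ n ^ 2 * (1 / (2 * n ^ 2)) := by gcongr; linarith
      _ = 1 / 2 := by field_simp
  have hdist' : (n : ℝ) * (1 - x) ≤ n ^ 2 * (1 - x) :=
    mul_le_mul_of_nonneg_right (by nlinarith) (by linarith)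
  have hexp : exp (n ^ 2 * (1 - x)) ≤ 5 / 3 := (exp_le_exp.mpr hdist).trans exp_half_le_five_thirds
  have hbern : 3 / 4 ≤ ((x + 1) / 2) ^ n := by
    have h := one_add_mul_le_pow (by nlinarith : -2 ≤ -((1 - x) / 2)) n
    rw [show 1 + -((1 - x) / 2) = (x + 1) / 2 by ring] at h
    linarith
  have hC : 0 ≤ jacobiCoeff n α β 0 := jacobiCoeff_nonneg hα hβ n.zero_le
  have h := neg_le_of_abs_le (abs_jacobiP_sub_le hα hβ hβn (by nlinarith) hx₁)
  nlinarith [mul_le_mul_of_nonneg_left hbern hC, mul_le_mul_of_nonneg_left hexp hC]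

theorem rpow_div_Gamma_le_jacobiP (hn : 1 ≤ n) (hα : 0 ≤ α) (hβ : -1 < β)
    (hβn : β ≤ n) (hx₀ : 1 - 1 / (2 * n ^ 2) ≤ x) (hx₁ : x ≤ 1) :
    (n : ℝ) ^ α / (12 * Gamma (α + 1)) ≤ jacobiP n α β x :=
  calc (n : ℝ) ^ α / (12 * Gamma (α + 1)) = (n : ℝ) ^ α / Gamma (α + 1) / 12 := by ring
    _ ≤ jacobiCoeff n α β 0 / 12 := by
        gcongr
        exact rpow_div_Gamma_le_jacobiCoeff_zero hn hα hβ
    _ ≤ jacobiP n α β x := jacobiCoeff_zero_div_le_jacobiP hn hα hβ hβn hx₀ hx₁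

theorem rpow_mul_le_setIntegral_rpow_abs_jacobiP {p a h : ℝ} {K : Set (ℝ × ℝ)}
    (hp : 0 ≤ p) (hK : IsCompact K) (hn : 1 ≤ n) (hα : 0 ≤ α) (hβ : -1 < β) (hβn : β ≤ n)
    (ha₀ : 1 - 1 / (2 * n ^ 2) ≤ a) (ha₁ : a ≤ 1) (hh : 0 ≤ h)
    (hRK : Set.Icc a ((a + 1) / 2) ×ˢ Set.Icc 0 h ⊆ K) :
    (n : ℝ) ^ (α * p) / (12 * Gamma (α + 1)) ^ p * ((1 - a) / 2 * h)
      ≤ ∫ z in K, |jacobiP n α β z.1| ^ p := by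
  set R := Set.Icc a ((a + 1) / 2) ×ˢ Set.Icc 0 h
  have hΓ := Gamma_pos_of_pos (by linarith : 0 < α + 1)
  have hint : IntegrableOn (fun z : ℝ × ℝ => |jacobiP n α β z.1| ^ p) K :=
    (((continuous_jacobiP n α β).comp continuous_fst).abs.rpow_const
      fun _ => Or.inr hp).continuousOn.integrableOn_compact hK
  have hlow : ∀ z ∈ R, (n : ℝ) ^ (α * p) / (12 * Gamma (α + 1)) ^ p ≤ |jacobiP n α β z.1| ^ p := by
    rintro ⟨u, v⟩ ⟨hu, -⟩
    rw [rpow_mul n.cast_nonneg, ← div_rpow (by positivity) (by positivity)]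
    exact rpow_le_rpow (by positivity) ((rpow_div_Gamma_le_jacobiP hn hα hβ hβn
      (ha₀.trans hu.1) (by linarith [hu.2])).trans (le_abs_self _)) hp
  have hvol : volume.real R = (1 - a) / 2 * h := by
    rw [Measure.volume_eq_prod, measureReal_prod_prod, volume_real_Icc_of_le (by linarith),
      volume_real_Icc_of_le hh]
    ring
  calc _ = (n : ℝ) ^ (α * p) / (12 * Gamma (α + 1)) ^ p * volume.real R := by rw [hvol]
    _ ≤ ∫ z in R, |jacobiP n α β z.1| ^ p :=
        setIntegral_ge_of_const_le_real (measurableSet_Icc.prod measurableSet_Icc)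
          (isCompact_Icc.prod isCompact_Icc).measure_lt_top.ne hlow (hint.mono_set hRK)
    _ ≤ ∫ z in K, |jacobiP n α β z.1| ^ p :=
        setIntegral_mono_set hint (.of_forall fun _ => by positivity) hRK.eventuallyLE

end NearOne

theorem rpow_mul_le_of_concaveOn_rpow {E : Type*} [AddCommGroup E] [Module ℝ E] {s : Set E}
    {g : E → ℝ} {r : ℝ} (hr : 0 < r) (hg : ConcaveOn ℝ s fun x => g x ^ (1 / r))
    (hg₀ : ∀ x ∈ s, 0 ≤ g x) {a b : E} (ha : a ∈ s) (hb : b ∈ s) (hgb : g b = 0) {t : ℝ}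
    (ht₀ : 0 ≤ t) (ht₁ : t ≤ 1) :
    t ^ r * g a ≤ g (t • a + (1 - t) • b) := by
  have hmem : t • a + (1 - t) • b ∈ s := hg.1 ha hb ht₀ (sub_nonneg.mpr ht₁) (add_sub_cancel t 1)
  have h := hg.2 ha hb ht₀ (sub_nonneg.mpr ht₁) (add_sub_cancel t 1)
  dsimp only at h
  rw [hgb, zero_rpow (by positivity), smul_zero, add_zero, smul_eq_mul] at h
  have h' := rpow_le_rpow (mul_nonneg ht₀ (rpow_nonneg (hg₀ a ha) _)) h hr.le
  rwa [mul_rpow ht₀ (rpow_nonneg (hg₀ a ha) _), one_div, rpow_inv_rpow (hg₀ a ha) hr.ne',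
    rpow_inv_rpow (hg₀ _ hmem) hr.ne'] at h'

theorem Icc_prod_Icc_subset_of_concaveOn_rpow {f : ℝ → ℝ} {a b r x : ℝ} (hr : 0 < r)
    (hconc : ConcaveOn ℝ (Set.Icc a b) fun x => f x ^ (1 / r))
    (hf₀ : ∀ x ∈ Set.Icc a b, 0 ≤ f x) (hfb : f b = 0) (hx : x ∈ Set.Ico a b) :
    Set.Icc x ((x + b) / 2) ×ˢ Set.Icc 0 ((1 / 2) ^ r * f x)
      ⊆ {z : ℝ × ℝ | a ≤ z.1 ∧ z.1 ≤ b ∧ 0 ≤ z.2 ∧ z.2 ≤ f z.1} := by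
  rintro ⟨u, v⟩ ⟨⟨hxu, hub⟩, hv₀, hv⟩
  obtain ⟨hax, hxb⟩ := hx
  refine ⟨hax.trans hxu, by linarith, hv₀, hv.trans ?_⟩
  have hbx : 0 < b - x := sub_pos.mpr hxb
  set t := (b - u) / (b - x)
  have ht₀ : 1 / 2 ≤ t := by rw [le_div_iff₀ hbx]; linarith
  have ht₁ : t ≤ 1 := by rw [div_le_one hbx]; linarith
  have hu : t • x + (1 - t) • b = u := by
    simp only [t, smul_eq_mul]
    field_simp
    ring
  calc (1 / 2) ^ r * f x ≤ t ^ r * f x := by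
        gcongr
        exact hf₀ x ⟨hax, hxb.le⟩
    _ ≤ f u := hu ▸ rpow_mul_le_of_concaveOn_rpow hr hconc hf₀ ⟨hax, hxb.le⟩
        ⟨hax.trans hxb.le, le_rfl⟩ hfb (by linarith) ht₁

theorem sqrt_one_div_four_sub_div_pow_four_mem_Icc {n ε : ℝ} (hn : n ≠ 0) (hε : ε ^ 2 ≤ 3 / 16) :
    √(1 / (4 * n ^ 4) - ε ^ 2 / n ^ 4) ∈ Set.Icc (1 / (4 * n ^ 2)) (1 / (2 * n ^ 2)) := by
  have hn4 : 0 < n ^ 4 := by positivity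
  rw [show 1 / (4 * n ^ 4) - ε ^ 2 / n ^ 4 = (1 / 4 - ε ^ 2) / n ^ 4 by ring]
  constructor
  · rw [le_sqrt' (by positivity), show (1 / (4 * n ^ 2)) ^ 2 = (1 / 16) / n ^ 4 by ring]
    exact div_le_div_of_nonneg_right (by linarith) hn4.le
  · rw [sqrt_le_iff, show (1 / (2 * n ^ 2)) ^ 2 = (1 / 4) / n ^ 4 by ring]
    exact ⟨by positivity, div_le_div_of_nonneg_right (by nlinarith) hn4.le⟩

theorem lower_bound_jacobi_on_cuspidal_general
    (p η : ℝ) (hp : 1 ≤ p)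
    (f : ℝ → ℝ)
    (hf_nonneg : ∀ x ∈ Set.Icc η 1, 0 ≤ f x)
    (hf1 : f 1 = 0)
    (r : ℝ) (hr : 1 ≤ r)
    (hconc : ConcaveOn ℝ (Set.Icc η 1) (fun x => f x ^ (1 / r)))
    (K : Set (ℝ × ℝ)) (hK : IsCompact K)
    (hK1 : {z : ℝ × ℝ | η ≤ z.1 ∧ z.1 ≤ 1 ∧ 0 ≤ z.2 ∧ z.2 ≤ f z.1} ⊆ K)
    (ε x : ℕ → ℝ) (N : ℕ)
    (hεx : ∀ n : ℕ, N ≤ n → 0 < ε n ∧ x n ∈ Set.Ioo η 1 ∧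
      x n = 1 - Real.sqrt (1 / (4 * (n : ℝ) ^ 4) - (ε n) ^ 2 / (n : ℝ) ^ 4) ∧
      f (x n) = ε n / (n : ℝ) ^ 2)
    (hε0 : Filter.Tendsto ε Filter.atTop (nhds 0))
    (α β : ℝ) (hα : 0 ≤ α) (hβ : -1 < β) :
    ∃ (Υ : ℝ) (n₀ : ℕ), 0 < Υ ∧ ∀ n : ℕ, n₀ ≤ n →
      Υ * ε n * (n : ℝ) ^ (α * p - 4) ≤ ∫ z in K, |jacobiP n α β z.1| ^ p := by
  obtain ⟨N', hN'⟩ := Filter.eventually_atTop.mp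
    (hε0.eventually (gt_mem_nhds (by norm_num : (0 : ℝ) < 1 / 4)))
  refine ⟨(1 / 2) ^ r / (8 * (12 * Gamma (α + 1)) ^ p), max (max N N') (max ⌈β⌉₊ 1),
    by positivity, fun n hn => ?_⟩
  simp only [max_le_iff] at hn
  obtain ⟨⟨hnN, hnN'⟩, hnβ, hn⟩ := hn
  obtain ⟨hε, hxη, hx, hfx⟩ := hεx n hnN
  have hnR : (1 : ℝ) ≤ n := by exact_mod_cast hn
  have hβn : β ≤ n := (Nat.le_ceil β).trans (by exact_mod_cast hnβ)
  have hgap := sqrt_one_div_four_sub_div_pow_four_mem_Icc (n := (n : ℝ)) (ε := ε n) (by positivity)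
    (by nlinarith [hN' n hnN'])
  rw [show √(1 / (4 * (n : ℝ) ^ 4) - ε n ^ 2 / n ^ 4) = 1 - x n by linarith] at hgap
  have hR := (Icc_prod_Icc_subset_of_concaveOn_rpow (by linarith) hconc hf_nonneg hf1
    ⟨hxη.1.le, hxη.2⟩).trans hK1
  refine le_trans ?_ (rpow_mul_le_setIntegral_rpow_abs_jacobiP (by linarith) hK hn hα hβ hβn
    (by linarith [hgap.2]) hxη.2.le (by rw [hfx]; positivity) hR)
  rw [hfx, rpow_sub (by positivity), rpow_ofNat]
  calc _ = (n : ℝ) ^ (α * p) / (12 * Gamma (α + 1)) ^ p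
        * (1 / (4 * n ^ 2) / 2 * ((1 / 2) ^ r * (ε n / n ^ 2))) := by
        field_simp
        ring
    _ ≤ _ := by gcongr; exact hgap.1

theorem lower_bound_jacobi_on_cuspidal
    (p η : ℝ) (hp : 1 ≤ p) (hη0 : 0 < η) (hη1 : η < 1)
    (f : ℝ → ℝ)
    (hf_cont : ContinuousOn f (Set.Icc η 1))
    (hf_nonneg : ∀ x ∈ Set.Icc η 1, 0 ≤ f x)
    (hf_anti : AntitoneOn f (Set.Icc η 1))
    (hf_conv : ConvexOn ℝ (Set.Icc η 1) f)
    (hfη : f η ≤ 1) (hf1 : f 1 = 0)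
    (hf_pos : ∀ x ∈ Set.Ico η 1, 0 < f x)
    (r : ℝ) (hr : 1 ≤ r)
    (hconc : ConcaveOn ℝ (Set.Icc η 1) (fun x => f x ^ (1 / r)))
    (K : Set (ℝ × ℝ)) (hK : IsCompact K)
    (hK1 : {z : ℝ × ℝ | η ≤ z.1 ∧ z.1 ≤ 1 ∧ 0 ≤ z.2 ∧ z.2 ≤ f z.1} ⊆ K)
    (ε x : ℕ → ℝ) (N : ℕ)
    (hεx : ∀ n : ℕ, N ≤ n → 0 < ε n ∧ x n ∈ Set.Ioo η 1 ∧
      x n = 1 - Real.sqrt (1 / (4 * (n : ℝ) ^ 4) - (ε n) ^ 2 / (n : ℝ) ^ 4) ∧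
      f (x n) = ε n / (n : ℝ) ^ 2)
    (hε0 : Filter.Tendsto ε Filter.atTop (nhds 0))
    (α β : ℝ) (hα : 0 ≤ α) (hβ : -1 < β) :
    ∃ (Υ : ℝ) (n₀ : ℕ), 0 < Υ ∧ ∀ n : ℕ, n₀ ≤ n →
      Υ * ε n * (n : ℝ) ^ (α * p - 4) ≤ ∫ z in K, |jacobiP n α β z.1| ^ p :=
  lower_bound_jacobi_on_cuspidal_general p η hp f hf_nonneg hf1 r hr hconc K hK hK1 ε x N hεx hε0 α
    β hα hβ
end

section
/- For every real number x with −1 ≤ x ≤ 1, one has √(1 − x²) · arccos(x) ≤ 2(1 − x). -/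
open Real

lemma aux_mul_cos_le_sin (t : ℝ) (h0 : 0 ≤ t) (h1 : t ≤ Real.pi) :
    t * Real.cos t ≤ Real.sin t := by
  have key : MonotoneOn (fun s : ℝ => Real.sin s - s * Real.cos s) (Set.Icc 0 Real.pi) := by
    apply monotoneOn_of_deriv_nonneg (convex_Icc 0 Real.pi)
    · exact ((Real.continuous_sin.sub (continuous_id.mul Real.continuous_cos)).continuousOn)
    · intro s hs
      have : DifferentiableAt ℝ (fun s : ℝ => Real.sin s - s * Real.cos s) s := by
        fun_prop
      exact this.differentiableWithinAt
    · intro s hs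
      simp only [interior_Icc, Set.mem_Ioo] at hs
      have hd : deriv (fun s : ℝ => Real.sin s - s * Real.cos s) s = s * Real.sin s := by
        have h1 : HasDerivAt (fun s : ℝ => Real.sin s - s * Real.cos s)
            (Real.cos s - (1 * Real.cos s + s * (-Real.sin s))) s :=
          (Real.hasDerivAt_sin s).sub ((hasDerivAt_id s).mul (Real.hasDerivAt_cos s))
        have := h1.deriv
        rw [this]; ring
      rw [hd]
      exact mul_nonneg hs.1.le (Real.sin_nonneg_of_nonneg_of_le_pi hs.1.le
        (le_of_lt (lt_of_lt_of_le hs.2 le_rfl)))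
  have h := key (Set.left_mem_Icc.mpr Real.pi_pos.le) (Set.mem_Icc.mpr ⟨h0, h1⟩) h0
  simp at h
  linarith

lemma aux_sin_mul_le (θ : ℝ) (h0 : 0 ≤ θ) (h1 : θ ≤ Real.pi) :
    Real.sin θ * θ ≤ 2 * (1 - Real.cos θ) := by
  set t := θ / 2 with ht
  have ht0 : 0 ≤ t := by positivity
  have ht1 : t ≤ Real.pi := by
    have := Real.pi_pos; simp only [ht]; linarith
  have hsin : Real.sin θ = 2 * Real.sin t * Real.cos t := by
    rw [ht, ← Real.sin_two_mul]; ring_nf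
  have hcos : Real.cos θ = 2 * Real.cos t ^ 2 - 1 := by
    rw [ht, ← Real.cos_two_mul]; ring_nf
  have hpyth := Real.sin_sq_add_cos_sq t
  have haux := aux_mul_cos_le_sin t ht0 ht1
  have hsnn : 0 ≤ Real.sin t := Real.sin_nonneg_of_nonneg_of_le_pi ht0 ht1
  have hθ : θ = 2 * t := by rw [ht]; ring
  rw [hsin, hcos, hθ]
  nlinarith [mul_le_mul_of_nonneg_left haux hsnn]

theorem sqrt_mul_arccos_le (x : ℝ) (hx : -1 ≤ x) (hx' : x ≤ 1) :
    Real.sqrt (1 - x ^ 2) * Real.arccos x ≤ 2 * (1 - x) := by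
  have h1 : Real.sqrt (1 - x ^ 2) = Real.sin (Real.arccos x) := (Real.sin_arccos x).symm
  have h2 : x = Real.cos (Real.arccos x) := (Real.cos_arccos hx hx').symm
  have h := aux_sin_mul_le _ (Real.arccos_nonneg x) (Real.arccos_le_pi x)
  rw [Real.cos_arccos hx hx'] at h
  rw [h1]
  exact h
end

section
/- Let F : [1/2, 1] → ℝ be differentiable, convex and nonincreasing with F(1) = 0. Suppose 1/2 ≤ x₁ < x₂ ≤ 1, 1/2 ≤ y < 1 and F(y) = F(x₁) − F(x₂). Then F(y)/(1 − y) ≤ (F(x₁) − F(x₂))/(x₂ − x₁). -/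
theorem convex_step_inequality
    (F : ℝ → ℝ)
    (hF_diff : DifferentiableOn ℝ F (Set.Icc (1 / 2 : ℝ) 1))
    (hF_conv : ConvexOn ℝ (Set.Icc (1 / 2 : ℝ) 1) F)
    (hF_anti : AntitoneOn F (Set.Icc (1 / 2 : ℝ) 1))
    (hF1 : F 1 = 0)
    (x₁ x₂ y : ℝ)
    (hx₁ : 1 / 2 ≤ x₁) (hx₁₂ : x₁ < x₂) (hx₂ : x₂ ≤ 1)
    (hy₁ : 1 / 2 ≤ y) (hy₂ : y < 1)
    (hFy : F y = F x₁ - F x₂) :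
    F y / (1 - y) ≤ (F x₁ - F x₂) / (x₂ - x₁) := by
  have hyS : y ∈ Set.Icc (1/2 : ℝ) 1 := ⟨hy₁, hy₂.le⟩
  have h1S : (1 : ℝ) ∈ Set.Icc (1/2 : ℝ) 1 := ⟨by norm_num, le_refl 1⟩
  have hx1S : x₁ ∈ Set.Icc (1/2 : ℝ) 1 := ⟨hx₁, hx₁₂.le.trans hx₂⟩
  have hx2S : x₂ ∈ Set.Icc (1/2 : ℝ) 1 := ⟨hx₁.trans hx₁₂.le, hx₂⟩
  have hFy0 : 0 ≤ F y := by
    have := hF_anti hyS h1S hy₂.le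
    linarith
  have hA : (0:ℝ) < x₂ - x₁ := by linarith
  have hB : (0:ℝ) < 1 - y := by linarith
  rw [← hFy]
  rcases le_or_gt (x₂ - x₁) (1 - y) with h | h
  · exact div_le_div_of_nonneg_left hFy0 hA h
  · -- then x₁ < y
    have hx1y : x₁ ≤ y := by linarith
    have h2 : (F x₂ - F x₁) / (x₂ - x₁) ≤ (F 1 - F x₁) / (1 - x₁) :=
      hF_conv.secant_mono hx1S hx2S h1S (by linarith) (by linarith) hx₂
    have h3 : (F x₁ - F 1) / (x₁ - 1) ≤ (F y - F 1) / (y - 1) :=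
      hF_conv.secant_mono h1S hx1S hyS (by linarith) (by linarith) hx1y
    have e1 : (F x₁ - F 1) / (x₁ - 1) = (F 1 - F x₁) / (1 - x₁) := by
      rw [← neg_div_neg_eq]; ring_nf
    have e2 : (F y - F 1) / (y - 1) = (0 - F y) / (1 - y) := by
      rw [← neg_div_neg_eq, hF1]; ring_nf
    rw [e1] at h3; rw [e2] at h3
    have h4 : (F x₂ - F x₁) / (x₂ - x₁) ≤ (0 - F y) / (1 - y) := h2.trans h3
    rw [div_le_div_iff₀ hA hB] at h4
    rw [hFy, div_le_div_iff₀ hB hA]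
    nlinarith
end

section
/- Let r ≥ 1, 0 < a ≤ 1/2, and let f : [1−a, 1] → [0,∞) be differentiable with r · f(x) ≥ −f'(x)(1−x) for all x ∈ [1−a, 1]. Then (r + 1) · ∫_0^1 z f(1 − a z²) dz ≥ (1/2) f(1 − a). In particular, taking a = 1/(2n²), one gets (r+1) ∫_0^1 z f(1 − z²/(2n²)) dz ≥ (1/2) f(1 − 1/(2n²)) for every n ∈ ℕ. -/
open intervalIntegral

theorem integral_lower_bound_from_derivative_bound
    (r a : ℝ) (hr : 1 ≤ r) (ha0 : 0 < a) (ha1 : a ≤ 1 / 2)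
    (f f' : ℝ → ℝ)
    (hf_nonneg : ∀ x ∈ Set.Icc (1 - a) 1, 0 ≤ f x)
    (hf_diff : ∀ x ∈ Set.Icc (1 - a) 1, HasDerivAt f (f' x) x)
    (hbound : ∀ x ∈ Set.Icc (1 - a) 1, r * f x ≥ -f' x * (1 - x)) :
    ((r + 1) * ∫ z in (0 : ℝ)..1, z * f (1 - a * z ^ 2)) ≥ (1 / 2) * f (1 - a) ∧
    (∀ n : ℕ, a = 1 / (2 * (n : ℝ) ^ 2) →
      ((r + 1) * ∫ z in (0 : ℝ)..1, z * f (1 - z ^ 2 / (2 * (n : ℝ) ^ 2))) ≥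
        (1 / 2) * f (1 - 1 / (2 * (n : ℝ) ^ 2))) := by
  have hfc : ContinuousOn f (Set.Icc (1 - a) 1) := fun x hx =>
    (hf_diff x hx).continuousAt.continuousWithinAt
  -- key pointwise inequality
  have key : ∀ s ∈ Set.Ioc (0:ℝ) 1, f (1 - a) * s ^ r ≤ f (1 - a * s) := by
    intro s hs
    obtain ⟨hs0, hs1⟩ := hs
    set ψ : ℝ → ℝ := fun t => f (1 - a * t) * t ^ (-r) with hψ
    have hmem : ∀ t ∈ Set.Icc s 1, (1 - a * t) ∈ Set.Icc (1 - a) 1 := by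
      intro t ht
      constructor
      · nlinarith [ht.2, ha0.le]
      · nlinarith [ht.1, ha0.le]
    have hD : ∀ t ∈ Set.Ioo s 1, HasDerivAt ψ
        (f' (1 - a * t) * -a * t ^ (-r) + f (1 - a * t) * (-r * t ^ (-r - 1))) t := by
      intro t ht
      have ht0 : 0 < t := lt_trans hs0 ht.1
      have h1 : HasDerivAt (fun t : ℝ => 1 - a * t) (-a) t := by
        simpa using ((hasDerivAt_id t).const_mul a).const_sub 1
      have hmem' : (1 - a * t) ∈ Set.Icc (1 - a) 1 :=
        hmem t ⟨ht.1.le, ht.2.le⟩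
      have h2 : HasDerivAt (fun t : ℝ => f (1 - a * t)) (f' (1 - a * t) * -a) t :=
        (hf_diff _ hmem').comp t h1
      have h3 : HasDerivAt (fun t : ℝ => t ^ (-r)) (-r * t ^ (-r - 1)) t :=
        Real.hasDerivAt_rpow_const (Or.inl ht0.ne')
      exact h2.mul h3
    have hanti : AntitoneOn ψ (Set.Icc s 1) := by
      apply antitoneOn_of_deriv_nonpos (convex_Icc s 1)
      · apply ContinuousOn.mul
        · exact hfc.comp (by fun_prop) hmem
        · intro t ht
          have ht0 : 0 < t := lt_of_lt_of_le hs0 ht.1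
          exact (Real.continuousAt_rpow_const t (-r) (Or.inl ht0.ne')).continuousWithinAt
      · intro t ht
        rw [interior_Icc] at ht
        exact ((hD t ht).differentiableAt).differentiableWithinAt
      · intro t ht
        rw [interior_Icc] at ht
        have ht0 : 0 < t := lt_trans hs0 ht.1
        rw [(hD t ht).deriv]
        have hx : (1 - a * t) ∈ Set.Icc (1 - a) 1 := hmem t ⟨ht.1.le, ht.2.le⟩
        have hb := hbound _ hx
        have h1x : 1 - (1 - a * t) = a * t := by ring
        rw [h1x] at hb
        have hrp : 0 < t ^ (-r - 1) := Real.rpow_pos_of_pos ht0 _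
        have htr : t ^ (-r) = t ^ (-r - 1) * t := by
          rw [← Real.rpow_add_one ht0.ne' (-r - 1)]
          ring_nf
        rw [htr]
        nlinarith [hrp, hb]
    have h1 : ψ 1 ≤ ψ s := hanti ⟨le_refl s, hs1⟩ ⟨hs1, le_refl 1⟩ hs1
    have hψ1 : ψ 1 = f (1 - a) := by simp [hψ]
    have hψs : ψ s = f (1 - a * s) * (s ^ r)⁻¹ := by
      simp [hψ, Real.rpow_neg hs0.le]
    rw [hψ1, hψs] at h1
    have hsr : 0 < s ^ r := Real.rpow_pos_of_pos hs0 r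
    rw [← le_div_iff₀ hsr]
    rw [div_eq_mul_inv]
    exact h1
  -- pointwise bound for the integrand
  have hpt : ∀ z ∈ Set.Icc (0:ℝ) 1,
      f (1 - a) * z ^ (2 * r + 1) ≤ z * f (1 - a * z ^ 2) := by
    intro z hz
    rcases eq_or_lt_of_le hz.1 with h0 | h0
    · rw [← h0]
      rw [Real.zero_rpow (by positivity)]
      simp
    · have hz2 : z ^ 2 ∈ Set.Ioc (0:ℝ) 1 := ⟨by positivity, by nlinarith [hz.2]⟩
      have hk := key (z ^ 2) hz2
      have hzr : z ^ (2 * r + 1) = (z ^ 2) ^ r * z := by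
        rw [Real.rpow_add h0, Real.rpow_one, Real.rpow_mul h0.le]
        norm_num
      rw [hzr]
      calc f (1 - a) * ((z ^ 2) ^ r * z) = (f (1 - a) * (z ^ 2) ^ r) * z := by ring
        _ ≤ f (1 - a * z ^ 2) * z := by
            apply mul_le_mul_of_nonneg_right hk h0.le
        _ = z * f (1 - a * z ^ 2) := by ring
  -- integrability
  have hmap : ∀ z ∈ Set.Icc (0:ℝ) 1, 1 - a * z ^ 2 ∈ Set.Icc (1 - a) 1 := by
    intro z hz
    have hz2 : z ^ 2 ≤ 1 := by nlinarith [hz.1, hz.2]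
    constructor
    · nlinarith [mul_le_mul_of_nonneg_left hz2 ha0.le]
    · nlinarith [mul_nonneg ha0.le (sq_nonneg z)]
  have hcont : ContinuousOn (fun z : ℝ => z * f (1 - a * z ^ 2)) (Set.Icc 0 1) := by
    apply ContinuousOn.mul continuousOn_id
    exact hfc.comp (by fun_prop) hmap
  have hint1 : IntervalIntegrable (fun z : ℝ => z * f (1 - a * z ^ 2))
      MeasureTheory.volume 0 1 := by
    apply ContinuousOn.intervalIntegrable
    rwa [Set.uIcc_of_le (by norm_num : (0:ℝ) ≤ 1)]
  have hint2 : IntervalIntegrable (fun z : ℝ => f (1 - a) * z ^ (2 * r + 1))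
      MeasureTheory.volume 0 1 := by
    apply IntervalIntegrable.const_mul
    apply intervalIntegral.intervalIntegrable_rpow (Or.inl (by linarith))
  -- integral comparison
  have hmono : (∫ z in (0:ℝ)..1, f (1 - a) * z ^ (2 * r + 1)) ≤
      ∫ z in (0:ℝ)..1, z * f (1 - a * z ^ 2) := by
    apply intervalIntegral.integral_mono_on (by norm_num) hint2 hint1 hpt
  have hval : (∫ z in (0:ℝ)..1, f (1 - a) * z ^ (2 * r + 1)) =
      f (1 - a) * (1 / (2 * r + 2)) := by
    rw [intervalIntegral.integral_const_mul,
      integral_rpow (Or.inl (by linarith : (-1:ℝ) < 2 * r + 1))]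
    rw [Real.one_rpow, Real.zero_rpow (by positivity)]
    ring_nf
  have hfna : 0 ≤ f (1 - a) := hf_nonneg _ ⟨le_refl _, by linarith⟩
  have main : ((r + 1) * ∫ z in (0 : ℝ)..1, z * f (1 - a * z ^ 2)) ≥
      (1 / 2) * f (1 - a) := by
    have h2 : f (1 - a) * (1 / (2 * r + 2)) ≤ ∫ z in (0:ℝ)..1, z * f (1 - a * z ^ 2) := by
      rw [← hval]; exact hmono
    have hr1 : 0 < r + 1 := by linarith
    calc (1 / 2) * f (1 - a) = (r + 1) * (f (1 - a) * (1 / (2 * r + 2))) := by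
          field_simp
      _ ≤ (r + 1) * ∫ z in (0:ℝ)..1, z * f (1 - a * z ^ 2) :=
          mul_le_mul_of_nonneg_left h2 hr1.le
  refine ⟨main, ?_⟩
  intro n hn
  have heq : ∀ z : ℝ, 1 - z ^ 2 / (2 * (n:ℝ) ^ 2) = 1 - a * z ^ 2 := by
    intro z
    rw [hn]
    ring
  simp only [heq]
  rw [← hn]
  exact main
end
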